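/- Let A be a Grothendieck abelian category. For any complex C in Comp(A), C is acyclic if and only if for every object E in a fixed generating set G of A and every integer n, the group Hom_{D(A)}(E, C[n]) in the derived category vanishes. -/

import Mathlib

/-!
An acyclic complex is quasi-isomorphic to `0`, hence zero in `D(A)`. Conversely, a morphism
`E ⟶ Zⁿ(C)` defines a morphism `E[-n] ⟶ C` of complexes; it vanishes in `D(A)` by hypothesis,
so its image under `Hⁿ`, which factors through `D(A)`, vanishes. That image is the
composite `E ⟶ Zⁿ(C) ⟶ Hⁿ(C)`, so the epimorphism `Zⁿ(C) ⟶ Hⁿ(C)` is zero because `G` is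
separating.
-/

open CategoryTheory Limits ZeroObject

namespace HomologicalComplex

variable {V : Type*} [Category V] [HasZeroMorphisms V] [HasZeroObject V]
  {ι : Type*} [DecidableEq ι] {c : ComplexShape ι}
  {K : HomologicalComplex V c} {j : ι} [K.HasHomology j] {A : V}

noncomputable def homFromSingleOfCycles (h : A ⟶ K.cycles j) : (single V c j).obj A ⟶ K :=
  mkHomFromSingle (h ≫ K.iCycles j) (fun k _ => by simp)

lemma singleObjHomologySelfIso_inv_homologyMap_homFromSingleOfCycles (h : A ⟶ K.cycles j) :
    (singleObjHomologySelfIso c j A).inv ≫ homologyMap (homFromSingleOfCycles h) j =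
      h ≫ K.homologyπ j := by
  rw [← singleObjCyclesSelfIso_inv_homologyπ, Category.assoc, homologyπ_naturality,
    ← Category.assoc]
  congr 1
  simp [← cancel_mono (K.iCycles j), homFromSingleOfCycles]

end HomologicalComplex

namespace DerivedCategory

variable {C : Type*} [Category C] [Abelian C] [HasDerivedCategory C]

lemma isZero_Q_obj_of_isZero_homology {K : CochainComplex C ℤ}
    (hK : ∀ n, IsZero (K.homology n)) : IsZero (Q.obj K) := by
  have : QuasiIso (0 : K ⟶ 0) := by
    rw [quasiIso_iff]
    intro n
    simp only [quasiIsoAt_iff_exactAt' _ _ ((HomologicalComplex.exactAt_iff_isZero_homology _ _).2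
        ((HomologicalComplex.homologyFunctor C _ n).map_isZero (isZero_zero _))),
      HomologicalComplex.exactAt_iff_isZero_homology, hK n]
  rw [← isIso_Q_map_iff_quasiIso] at this
  exact (Q.map_isZero (isZero_zero _)).of_iso (asIso (Q.map (0 : K ⟶ 0)))

lemma homologyMap_eq_zero_of_Q_map_eq_zero {K L : CochainComplex C ℤ} {f : K ⟶ L}
    (hf : Q.map f = 0) (n : ℤ) : HomologicalComplex.homologyMap f n = 0 := by
  have h := (homologyFunctorFactors_hom_naturality f n).symm
  rw [hf, Functor.map_zero, zero_comp] at h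
  exact (Iso.cancel_iso_hom_left ((homologyFunctorFactors C n).app K) _ _).1
    (h.trans comp_zero.symm)

noncomputable def Q_single_homEquiv (E : C) (Y : DerivedCategory C) (n : ℤ) :
    (Q.obj ((HomologicalComplex.single C (.up ℤ) n).obj E) ⟶ Y) ≃
      (Q.obj ((HomologicalComplex.single C (.up ℤ) 0).obj E) ⟶ Y⟦n⟧) :=
  (((singleFunctors C).shiftIso (-n) n 0 (neg_add_cancel n)).app E).symm.homCongr (Iso.refl Y)
    |>.trans ((shiftEquiv' (DerivedCategory C) (-n) n (neg_add_cancel n)).toAdjunction.homEquiv _ _)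

lemma comp_homologyπ_eq_zero_of_subsingleton {K : CochainComplex C ℤ} {n : ℤ} {E : C}
    (hE : Subsingleton (Q.obj ((HomologicalComplex.single C (.up ℤ) n).obj E) ⟶ Q.obj K))
    (h : E ⟶ K.cycles n) :
    h ≫ K.homologyπ n = 0 := by
  have hQ : Q.map (HomologicalComplex.homFromSingleOfCycles h) = 0 := hE.elim _ _
  rw [← HomologicalComplex.singleObjHomologySelfIso_inv_homologyMap_homFromSingleOfCycles,
    homologyMap_eq_zero_of_Q_map_eq_zero hQ, comp_zero]

end DerivedCategory

theorem acyclic_iff_hom_derived_vanishes_general {A : Type*} [Category A] [Abelian A]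
    [HasDerivedCategory A]
    (G : Set A) (hG : ObjectProperty.IsSeparating G) (C : CochainComplex A ℤ) :
    (∀ n : ℤ, IsZero (C.homology n)) ↔
      ∀ E ∈ G, ∀ n : ℤ,
        Subsingleton
          ((DerivedCategory.Q.obj ((HomologicalComplex.single A (ComplexShape.up ℤ) 0).obj E)) ⟶
            (DerivedCategory.Q.obj C)⟦n⟧) := by
  refine ⟨fun hC E _ n => ?_, fun hC n => ?_⟩
  · have hQC := DerivedCategory.isZero_Q_obj_of_isZero_homology hC
    exact ⟨((shiftFunctor _ n).map_isZero hQC).eq_of_tgt⟩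
  · have hπ : C.homologyπ n = 0 := (Preadditive.isSeparating_iff G).1 hG _ fun E hE h => by
      refine DerivedCategory.comp_homologyπ_eq_zero_of_subsingleton ?_ h
      exact (DerivedCategory.Q_single_homEquiv E _ n).subsingleton_congr.2 (hC E hE n)
    exact IsZero.of_epi_eq_zero _ hπ

/-- in a Grothendieck abelian category `A` with generating set `G`, a complex `C`
is acyclic iff for every `E` in `G` and every integer `n`, `Hom_{D(A)}(E, C[n]) = 0`. -/
theorem acyclic_iff_hom_derived_vanishes {A : Type*} [Category A] [Abelian A]
    [HasFilteredColimits A] [AB5 A] [HasDerivedCategory A]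
    (G : Set A) (hG : ObjectProperty.IsSeparating G) (C : CochainComplex A ℤ) :
    (∀ n : ℤ, IsZero (C.homology n)) ↔
      ∀ E ∈ G, ∀ n : ℤ,
        Subsingleton
          ((DerivedCategory.Q.obj ((HomologicalComplex.single A (ComplexShape.up ℤ) 0).obj E)) ⟶
            (DerivedCategory.Q.obj C)⟦n⟧) :=
  acyclic_iff_hom_derived_vanishes_general G hG C
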